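/- arXiv:2003.11934 — 3 statements merged into one kernel-verified Lean document; each statement's English description precedes it below -/
import Mathlib

section
/- Let α₁, α₂, β₁, β₂, γ₁ be real numbers with α₁ > 0, α₂ > 0, β₁ > 0, β₂ > 0, γ₁ ∈ ℝ with α₁γ₁ + β₁β₂ > 0. Set d = β₁/(β₁+β₂) and suppose 0 < ε < α₁α₂/(α₁γ₁ + β₁β₂). Then the 2×2 symmetric matrix Q = [[(1−d)α₁, −((1−d)β₁ + dβ₂)/2], [−((1−d)β₁ + dβ₂)/2, d(α₂/ε − γ₁)]] is positive definite. -/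
open Matrix Filter

def IsHurwitz {n : Type*} [Fintype n] [DecidableEq n] (A : Matrix n n ℝ) : Prop :=
  ∀ μ ∈ spectrum ℂ (A.map Complex.ofReal), μ.re < 0

noncomputable def sigmaMax {m n : Type*} [Fintype m] [Fintype n] [DecidableEq n]
    (M : Matrix m n ℝ) : ℝ :=
  ‖LinearMap.toContinuousLinearMap (Matrix.toEuclideanLin M)‖

noncomputable def enorm2 {n : Type*} [Fintype n] (x : n → ℝ) : ℝ :=
  Real.sqrt (∑ i, x i ^ 2)

theorem stmt_8 (α₁ α₂ β₁ β₂ γ₁ ε : ℝ)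
    (hα₁ : 0 < α₁) (hα₂ : 0 < α₂) (hβ₁ : 0 < β₁) (hβ₂ : 0 < β₂)
    (hden : 0 < α₁ * γ₁ + β₁ * β₂)
    (d : ℝ) (hd : d = β₁ / (β₁ + β₂))
    (hε : 0 < ε) (hε' : ε < α₁ * α₂ / (α₁ * γ₁ + β₁ * β₂)) :
    (Matrix.of !![(1 - d) * α₁, -((1 - d) * β₁ + d * β₂) / 2;
                  -((1 - d) * β₁ + d * β₂) / 2, d * (α₂ / ε - γ₁)]).PosDef := by
  have hs : 0 < β₁ + β₂ := by linarith
  have hd' : 0 < d := by rw [hd]; positivity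
  have hd1 : d < 1 := by
    rw [hd, div_lt_one hs]; linarith
  -- key: ε * (α₁γ₁ + β₁β₂) < α₁α₂
  have hkey : ε * (α₁ * γ₁ + β₁ * β₂) < α₁ * α₂ := by
    rw [lt_div_iff₀ hden] at hε'; linarith
  -- c > 0
  set a := (1 - d) * α₁ with ha
  set b := -((1 - d) * β₁ + d * β₂) / 2 with hb
  set c := d * (α₂ / ε - γ₁) with hc
  have ha0 : 0 < a := by apply mul_pos; linarith; exact hα₁
  have hdet : 0 < a * c - b * b := by
    have h1 : (1 - d) * β₁ = d * β₂ := by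
      rw [hd]; field_simp; ring
    have hαε : α₁ * γ₁ + β₁ * β₂ < α₁ * (α₂ / ε) := by
      rw [show α₁ * (α₂ / ε) = α₁ * α₂ / ε from by ring, lt_div_iff₀ hε]; linarith
    have : b * b = ((1 - d) * β₁) * (d * β₂) := by
      rw [hb, h1]; ring
    rw [this, ha, hc]
    have : (1 - d) * α₁ * (d * (α₂ / ε - γ₁)) - (1 - d) * β₁ * (d * β₂) =
        (1 - d) * d * (α₁ * (α₂ / ε) - α₁ * γ₁ - β₁ * β₂) := by ring
    rw [this]
    apply mul_pos (by nlinarith)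
    nlinarith
  rw [Matrix.posDef_iff_dotProduct_mulVec]
  constructor
  · show _ᴴ = _
    ext i j
    fin_cases i <;> fin_cases j <;> simp <;> rfl
  · intro x hx
    have hform : (star x ⬝ᵥ (Matrix.of !![a, b; b, c]).mulVec x) =
        a * x 0 * x 0 + b * x 0 * x 1 + b * x 1 * x 0 + c * x 1 * x 1 := by
      have e : ∀ i j, (Matrix.of !![a, b; b, c]) i j = !![a, b; b, c] i j := fun _ _ => rfl
      simp [Matrix.mulVec, dotProduct, Fin.sum_univ_two, e]; ring
    rw [hform]
    have hx01 : x 0 ≠ 0 ∨ x 1 ≠ 0 := by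
      by_contra h
      push_neg at h
      apply hx
      ext i; fin_cases i <;> simp [h.1, h.2]
    rcases hx01 with h | h
    · have hc0 : 0 < c := by nlinarith [sq_nonneg b]
      nlinarith [sq_nonneg (b * x 0 + c * x 1), mul_pos hdet (mul_self_pos.2 h), hc0]
    · nlinarith [sq_nonneg (a * x 0 + b * x 1), mul_pos hdet (mul_self_pos.2 h)]
end

section
/- Let V_s(x) = xᵀPx and V_f(η) = ηᵀHη with P, H symmetric positive definite, and suppose along trajectories of the coupled linear system ẋ = A₁₁x + A₁₂η, εη̇ = A₂₁x + A₂₂η the following bounds hold for some α₁, α₂, β₁, β₂ > 0, γ₁ ∈ ℝ: (∇V_s)·(A₁₁x) ≤ −α₁‖x‖², (∇V_s)·(A₁₂η) ≤ β₁‖x‖‖η‖, (1/ε)(∇V_f)·(A₂₂η) ≤ −(α₂/ε)‖η‖², and (∇V_f)·(A₂₁x/ε) ≤ γ₁‖η‖² + β₂‖x‖‖η‖. If 0 < ε < α₁α₂/(α₁γ₁ + β₁β₂), then with d = β₁/(β₁+β₂) the function v(x,η) = (1−d)V_s(x) + dV_f(η) satisfies v̇ ≤ −c(‖x‖² + ‖η‖²)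 for some c > 0 along trajectories; consequently (x,η) = (0,0) is asymptotically stable. -/
open Matrix Filter

lemma quad_scale {k : ℕ} (Q : Matrix (Fin k) (Fin k) ℝ) (r : ℝ) (z : Fin k → ℝ) :
    (r • z) ⬝ᵥ Q.mulVec (r • z) = r ^ 2 * (z ⬝ᵥ Q.mulVec z) := by
  rw [Matrix.mulVec_smul, dotProduct_smul, smul_dotProduct]
  simp [smul_smul]; ring

lemma quad_bounds {k : ℕ} (Q : Matrix (Fin k) (Fin k) ℝ) (hQ : Q.PosDef) :
    ∃ a > 0, ∃ b : ℝ, (∀ z : Fin k → ℝ, a * (∑ i, z i ^ 2) ≤ z ⬝ᵥ Q.mulVec z) ∧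
      (∀ z : Fin k → ℝ, z ⬝ᵥ Q.mulVec z ≤ b * (∑ i, z i ^ 2)) := by
  rcases Nat.eq_zero_or_pos k with hk | hk
  · subst hk
    refine ⟨1, one_pos, 0, ?_, ?_⟩ <;> intro z <;> simp [dotProduct]
  -- the sphere {z | ∑ z i ^ 2 = 1}
  set S : Set (Fin k → ℝ) := {z | ∑ i, z i ^ 2 = 1} with hS
  have hg : Continuous fun z : Fin k → ℝ => ∑ i, z i ^ 2 :=
    continuous_finset_sum _ fun i _ => (continuous_apply i).pow 2
  have hf : Continuous fun z : Fin k → ℝ => z ⬝ᵥ Q.mulVec z := by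
    unfold dotProduct Matrix.mulVec
    exact continuous_finset_sum _ fun i _ => (continuous_apply i).mul
      (continuous_finset_sum _ fun j _ => (continuous_const.mul (continuous_apply j)))
  have hclosed : IsClosed S := isClosed_eq hg continuous_const
  have hbdd : Bornology.IsBounded S := by
    apply Bornology.IsBounded.subset (Metric.isBounded_closedBall (x := (0 : Fin k → ℝ)) (r := 1))
    intro z hz
    simp only [Metric.mem_closedBall, dist_zero_right]
    rw [pi_norm_le_iff_of_nonneg zero_le_one]
    intro i
    rw [Real.norm_eq_abs, abs_le]
    constructor <;> nlinarith [Finset.single_le_sum (f := fun j => z j ^ 2)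
      (fun j _ => sq_nonneg (z j)) (Finset.mem_univ i), hz.out]
  have hcompact : IsCompact S := Metric.isCompact_of_isClosed_isBounded hclosed hbdd
  have hne : S.Nonempty := by
    refine ⟨Pi.single ⟨0, hk⟩ 1, ?_⟩
    simp only [hS, Set.mem_setOf_eq]
    rw [Finset.sum_eq_single ⟨0, hk⟩] <;> simp +contextual [Pi.single_apply]
  obtain ⟨za, hza, hmin⟩ := hcompact.exists_isMinOn hne hf.continuousOn
  obtain ⟨zb, hzb, hmax⟩ := hcompact.exists_isMaxOn hne hf.continuousOn
  have hza0 : za ≠ 0 := by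
    intro h0; rw [hS] at hza; simp [h0] at hza
  have ha : 0 < za ⬝ᵥ Q.mulVec za := by simpa using hQ.dotProduct_mulVec_pos hza0
  refine ⟨_, ha, zb ⬝ᵥ Q.mulVec zb, ?_, ?_⟩ <;> intro z <;>
  · rcases eq_or_ne (∑ i, z i ^ 2) 0 with h0 | h0
    · have hz0 : z = 0 := by
        funext i
        have := (Finset.sum_eq_zero_iff_of_nonneg (fun j _ => sq_nonneg (z j))).1 h0 i
          (Finset.mem_univ i)
        exact pow_eq_zero_iff (n := 2) (by norm_num) |>.1 this
      simp [hz0, h0]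
    · have hpos : 0 < ∑ i, z i ^ 2 :=
        lt_of_le_of_ne (Finset.sum_nonneg fun j _ => sq_nonneg (z j)) (Ne.symm h0)
      set r : ℝ := Real.sqrt (∑ i, z i ^ 2) with hr
      have hrpos : 0 < r := Real.sqrt_pos.2 hpos
      have hr2 : r ^ 2 = ∑ i, z i ^ 2 := Real.sq_sqrt hpos.le
      have hu : (r⁻¹ • z) ∈ S := by
        simp only [hS, Set.mem_setOf_eq, Pi.smul_apply, smul_eq_mul, mul_pow,
          ← Finset.mul_sum, ← hr2]
        field_simp
      have key : z ⬝ᵥ Q.mulVec z = r ^ 2 * ((r⁻¹ • z) ⬝ᵥ Q.mulVec (r⁻¹ • z)) := by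
        rw [quad_scale]; field_simp
      have hr2pos : (0:ℝ) < r ^ 2 := by positivity
      first
      | · have h' := hmin hu
          simp only [Set.mem_setOf_eq] at h'
          rw [← hr2, key]
          nlinarith
      | · have h' := hmax hu
          simp only [Set.mem_setOf_eq] at h'
          rw [← hr2, key]
          nlinarith

lemma hasDerivAt_quad {k : ℕ} (Q : Matrix (Fin k) (Fin k) ℝ) {u : ℝ → Fin k → ℝ}
    {u' : Fin k → ℝ} {t : ℝ} (hu : HasDerivAt u u' t) :
    HasDerivAt (fun s => u s ⬝ᵥ Q.mulVec (u s)) (((Q + Qᵀ).mulVec (u t)) ⬝ᵥ u') t := by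
  have hcomp : ∀ i, HasDerivAt (fun s => u s i) (u' i) t := fun i => hasDerivAt_pi.1 hu i
  have h : HasDerivAt (fun s => ∑ i, u s i * ∑ j, Q i j * u s j)
      (∑ i, (u' i * ∑ j, Q i j * u t j + u t i * ∑ j, Q i j * u' j)) t :=
    HasDerivAt.fun_sum fun i _ => (hcomp i).mul
      (HasDerivAt.fun_sum fun j _ => (hcomp j).const_mul (Q i j))
  have heq : (fun s => ∑ i, u s i * ∑ j, Q i j * u s j)
      = fun s => u s ⬝ᵥ Q.mulVec (u s) := by
    funext s; simp [dotProduct, Matrix.mulVec]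
  rw [heq] at h
  convert h using 1
  simp only [dotProduct, Matrix.mulVec, Matrix.add_apply, Matrix.transpose_apply,
    Finset.sum_add_distrib, add_mul, Finset.sum_mul, Finset.mul_sum]
  congr 1
  · exact Finset.sum_congr rfl fun i _ => Finset.sum_congr rfl fun j _ => by ring
  · rw [Finset.sum_comm]
    exact Finset.sum_congr rfl fun i _ => Finset.sum_congr rfl fun j _ => by ring


lemma young_combine {A B b : ℝ} (hA : 0 < A) (hB : 0 < B) (hAB : b^2 < A*B) :
    ∃ c > 0, ∀ X Y : ℝ, -A*X^2 + 2*b*X*Y - B*Y^2 ≤ -c*(X^2+Y^2) := by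
  set θ := (A + b^2/B)/2 with hθdef
  have hb2B : 0 ≤ b^2/B := by positivity
  have hθ : 0 < θ := by positivity
  have hb2BA : b^2/B < A := (div_lt_iff₀ hB).2 (by linarith)
  have hθA : θ < A := by rw [hθdef]; linarith
  have hBθ : B*θ = (A*B + b^2)/2 := by rw [hθdef]; field_simp
  have hbθ : b^2/θ < B := by rw [div_lt_iff₀ hθ, hBθ]; linarith
  refine ⟨min (A-θ) (B - b^2/θ), lt_min (by linarith) (by linarith), ?_⟩
  intro X Y
  have hθb : θ*(b^2/θ) = b^2 := mul_div_cancel₀ _ hθ.ne'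
  have h2b : 2*b*X*Y ≤ θ*X^2 + b^2/θ*Y^2 := by
    nlinarith [sq_nonneg (θ*X - b*Y), hθ, hθb, mul_pos hθ hθ]
  have hc1 : min (A-θ) (B-b^2/θ) ≤ A-θ := min_le_left _ _
  have hc2 : min (A-θ) (B-b^2/θ) ≤ B-b^2/θ := min_le_right _ _
  nlinarith [sq_nonneg X, sq_nonneg Y]

set_option maxHeartbeats 1000000 in
theorem stmt_11 {n m : ℕ}
    (P : Matrix (Fin n) (Fin n) ℝ) (H : Matrix (Fin m) (Fin m) ℝ)
    (hP : P.PosDef) (hH : H.PosDef)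
    (A₁₁ : Matrix (Fin n) (Fin n) ℝ) (A₁₂ : Matrix (Fin n) (Fin m) ℝ)
    (A₂₁ : Matrix (Fin m) (Fin n) ℝ) (A₂₂ : Matrix (Fin m) (Fin m) ℝ)
    (α₁ α₂ β₁ β₂ γ₁ ε : ℝ)
    (hα₁ : 0 < α₁) (hα₂ : 0 < α₂) (hβ₁ : 0 < β₁) (hβ₂ : 0 < β₂)
    (hden : 0 < α₁ * γ₁ + β₁ * β₂)
    (hε : 0 < ε) (hε' : ε < α₁ * α₂ / (α₁ * γ₁ + β₁ * β₂))
    (h1 : ∀ x : Fin n → ℝ, ((P + Pᵀ).mulVec x) ⬝ᵥ (A₁₁.mulVec x) ≤ -α₁ * enorm2 x ^ 2)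
    (h2 : ∀ (x : Fin n → ℝ) (η : Fin m → ℝ),
      ((P + Pᵀ).mulVec x) ⬝ᵥ (A₁₂.mulVec η) ≤ β₁ * enorm2 x * enorm2 η)
    (h3 : ∀ η : Fin m → ℝ,
      (1 / ε) * (((H + Hᵀ).mulVec η) ⬝ᵥ (A₂₂.mulVec η)) ≤ -(α₂ / ε) * enorm2 η ^ 2)
    (h4 : ∀ (x : Fin n → ℝ) (η : Fin m → ℝ),
      ((H + Hᵀ).mulVec η) ⬝ᵥ ((1 / ε) • A₂₁.mulVec x) ≤
        γ₁ * enorm2 η ^ 2 + β₂ * enorm2 x * enorm2 η)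
    (d : ℝ) (hd : d = β₁ / (β₁ + β₂))
    (x : ℝ → Fin n → ℝ) (η : ℝ → Fin m → ℝ)
    (hx : ∀ t, HasDerivAt x (A₁₁.mulVec (x t) + A₁₂.mulVec (η t)) t)
    (hη : ∀ t, HasDerivAt η ((1 / ε) • (A₂₁.mulVec (x t) + A₂₂.mulVec (η t))) t) :
    ∃ c > 0, (∀ t, deriv (fun s =>
        (1 - d) * ((x s) ⬝ᵥ P.mulVec (x s)) + d * ((η s) ⬝ᵥ H.mulVec (η s))) t ≤
        -c * (enorm2 (x t) ^ 2 + enorm2 (η t) ^ 2)) ∧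
      Tendsto (fun t => enorm2 (x t)) atTop (nhds 0) ∧
      Tendsto (fun t => enorm2 (η t)) atTop (nhds 0) := by
  -- basic facts about d
  have hσ : 0 < β₁ + β₂ := by linarith
  have hdpos : 0 < d := hd ▸ div_pos hβ₁ hσ
  have hdlt : d < 1 := by rw [hd, div_lt_one hσ]; linarith
  have hd1 : 0 < 1 - d := by linarith
  have hbeq : (1-d)*β₁ = d*β₂ := by rw [hd]; field_simp; ring
  -- key inequality from hε'
  have hεd : ε * (α₁*γ₁+β₁*β₂) < α₁*α₂ := (lt_div_iff₀ hden).1 hε'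
  have h5 : β₁*β₂ + α₁*γ₁ < α₁*(α₂/ε) := by
    rw [← mul_div_assoc, lt_div_iff₀ hε]; nlinarith
  have hkey : β₁*β₂ < α₁*(α₂/ε - γ₁) := by nlinarith
  have hW : 0 < α₂/ε - γ₁ := by nlinarith
  -- the constant c
  obtain ⟨c, hc, hfin⟩ := young_combine (A := (1-d)*α₁) (B := d*(α₂/ε - γ₁))
    (b := (1-d)*β₁) (mul_pos hd1 hα₁) (mul_pos hdpos hW)
    (by
      have hsq : ((1-d)*β₁)^2 = (1-d)*d*(β₁*β₂) := by
        linear_combination ((1-d)*β₁) * hbeq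
      rw [hsq]
      nlinarith [mul_lt_mul_of_pos_left hkey (mul_pos hd1 hdpos)])
  -- the Lyapunov function and its derivative
  set V : ℝ → ℝ := fun s =>
    (1 - d) * ((x s) ⬝ᵥ P.mulVec (x s)) + d * ((η s) ⬝ᵥ H.mulVec (η s)) with hVdef
  set DV : ℝ → ℝ := fun t =>
    (1-d)*(((P+Pᵀ).mulVec (x t)) ⬝ᵥ (A₁₁.mulVec (x t) + A₁₂.mulVec (η t))) +
    d*(((H+Hᵀ).mulVec (η t)) ⬝ᵥ ((1/ε) • (A₂₁.mulVec (x t) + A₂₂.mulVec (η t)))) with hDVdef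
  have hderiv : ∀ t, HasDerivAt V (DV t) t := fun t =>
    (HasDerivAt.const_mul (1-d) (hasDerivAt_quad P (hx t))).add
      (HasDerivAt.const_mul d (hasDerivAt_quad H (hη t)))
  -- derivative bound
  have hbound : ∀ t, DV t ≤ -c * (enorm2 (x t) ^ 2 + enorm2 (η t) ^ 2) := by
    intro t
    set X := enorm2 (x t) with hX
    set Y := enorm2 (η t) with hY
    have e1 : ((P+Pᵀ).mulVec (x t)) ⬝ᵥ (A₁₁.mulVec (x t) + A₁₂.mulVec (η t))
        ≤ -α₁*X^2 + β₁*X*Y := by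
      rw [dotProduct_add]
      have ha := h1 (x t); have hb := h2 (x t) (η t); rw [← hX] at ha hb
      rw [← hY] at hb; linarith
    have e2 : ((H+Hᵀ).mulVec (η t)) ⬝ᵥ ((1/ε) • (A₂₁.mulVec (x t) + A₂₂.mulVec (η t)))
        ≤ γ₁*Y^2 + β₂*X*Y - (α₂/ε)*Y^2 := by
      rw [smul_add, dotProduct_add]
      have ha := h4 (x t) (η t); have hb := h3 (η t)
      rw [← hX] at ha; rw [← hY] at ha hb
      have hsm : ((H+Hᵀ).mulVec (η t)) ⬝ᵥ ((1/ε) • (A₂₂.mulVec (η t)))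
          = (1/ε) * (((H+Hᵀ).mulVec (η t)) ⬝ᵥ (A₂₂.mulVec (η t))) := by
        rw [dotProduct_smul, smul_eq_mul]
      rw [hsm]; linarith
    have t1 := mul_le_mul_of_nonneg_left e1 hd1.le
    have t2 := mul_le_mul_of_nonneg_left e2 hdpos.le
    have hEq : (1-d)*(-α₁*X^2+β₁*X*Y) + d*(γ₁*Y^2+β₂*X*Y-(α₂/ε)*Y^2)
        = -((1-d)*α₁)*X^2 + 2*((1-d)*β₁)*X*Y - (d*(α₂/ε - γ₁))*Y^2 := by
      linear_combination (-(X*Y)) * hbeq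
    calc DV t ≤ (1-d)*(-α₁*X^2+β₁*X*Y) + d*(γ₁*Y^2+β₂*X*Y-(α₂/ε)*Y^2) := by
              rw [hDVdef]; exact add_le_add t1 t2
      _ = -((1-d)*α₁)*X^2 + 2*((1-d)*β₁)*X*Y - (d*(α₂/ε - γ₁))*Y^2 := hEq
      _ ≤ -c*(X^2+Y^2) := hfin X Y
  -- quadratic bounds on V
  obtain ⟨mP, hmP, MP, hPl, hPu⟩ := quad_bounds P hP
  obtain ⟨mH, hmH, MH, hHl, hHu⟩ := quad_bounds H hH
  set Sx : ℝ → ℝ := fun t => ∑ i, x t i ^ 2 with hSxdef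
  set Sη : ℝ → ℝ := fun t => ∑ i, η t i ^ 2 with hSηdef
  have hSx0 : ∀ t, 0 ≤ Sx t := fun t => Finset.sum_nonneg fun i _ => sq_nonneg _
  have hSη0 : ∀ t, 0 ≤ Sη t := fun t => Finset.sum_nonneg fun i _ => sq_nonneg _
  have hX2 : ∀ t, enorm2 (x t) ^ 2 = Sx t := fun t => Real.sq_sqrt (hSx0 t)
  have hY2 : ∀ t, enorm2 (η t) ^ 2 = Sη t := fun t => Real.sq_sqrt (hSη0 t)
  set mlow : ℝ := min ((1-d)*mP) (d*mH) with hmlowdef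
  have hmlow : 0 < mlow := lt_min (mul_pos hd1 hmP) (mul_pos hdpos hmH)
  set K : ℝ := max (max ((1-d)*MP) (d*MH)) 1 with hKdef
  have hK : 0 < K := lt_of_lt_of_le one_pos (le_max_right _ _)
  have hVlow : ∀ t, mlow * Sx t + mlow * Sη t ≤ V t := by
    intro t
    have l1 : mlow * Sx t ≤ (1-d)*mP * Sx t :=
      mul_le_mul_of_nonneg_right (min_le_left _ _) (hSx0 t)
    have l2 : (1-d)*(mP * Sx t) ≤ (1-d)*((x t) ⬝ᵥ P.mulVec (x t)) :=
      mul_le_mul_of_nonneg_left (hPl (x t)) hd1.le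
    have l3 : mlow * Sη t ≤ d*mH * Sη t :=
      mul_le_mul_of_nonneg_right (min_le_right _ _) (hSη0 t)
    have l4 : d*(mH * Sη t) ≤ d*((η t) ⬝ᵥ H.mulVec (η t)) :=
      mul_le_mul_of_nonneg_left (hHl (η t)) hdpos.le
    have hVt : V t = (1 - d) * ((x t) ⬝ᵥ P.mulVec (x t)) + d * ((η t) ⬝ᵥ H.mulVec (η t)) := rfl
    rw [hVt]; linarith
  have hVnn : ∀ t, 0 ≤ V t := fun t => le_trans
    (add_nonneg (mul_nonneg hmlow.le (hSx0 t)) (mul_nonneg hmlow.le (hSη0 t)))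
    (hVlow t)
  have hVup : ∀ t, V t ≤ K * (Sx t + Sη t) := by
    intro t
    have u1 : (1-d)*((x t) ⬝ᵥ P.mulVec (x t)) ≤ (1-d)*(MP * Sx t) :=
      mul_le_mul_of_nonneg_left (hPu (x t)) hd1.le
    have u2 : (1-d)*MP * Sx t ≤ K * Sx t :=
      mul_le_mul_of_nonneg_right (le_trans (le_max_left _ _) (le_max_left _ _)) (hSx0 t)
    have u3 : d*((η t) ⬝ᵥ H.mulVec (η t)) ≤ d*(MH * Sη t) :=
      mul_le_mul_of_nonneg_left (hHu (η t)) hdpos.le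
    have u4 : d*MH * Sη t ≤ K * Sη t :=
      mul_le_mul_of_nonneg_right (le_trans (le_max_right _ _) (le_max_left _ _)) (hSη0 t)
    have hVt : V t = (1 - d) * ((x t) ⬝ᵥ P.mulVec (x t)) + d * ((η t) ⬝ᵥ H.mulVec (η t)) := rfl
    rw [hVt]; linarith
  set k : ℝ := c / K with hkdef
  have hk : 0 < k := div_pos hc hK
  have hkK : k * K = c := div_mul_cancel₀ _ hK.ne'
  have hVk : ∀ t, DV t ≤ -k * V t := by
    intro t
    have b1 := hbound t
    rw [hX2 t, hY2 t] at b1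
    have b2 : k * V t ≤ k * (K * (Sx t + Sη t)) :=
      mul_le_mul_of_nonneg_left (hVup t) hk.le
    have b3 : k * (K * (Sx t + Sη t)) = c * (Sx t + Sη t) := by
      rw [← mul_assoc, hkK]
    linarith
  -- the auxiliary function w = V * exp(k t) is antitone
  set w : ℝ → ℝ := fun s => V s * Real.exp (k*s) with hwdef
  have hexp : ∀ t : ℝ, HasDerivAt (fun s : ℝ => Real.exp (k*s)) (Real.exp (k*t) * k) t := by
    intro t
    have : HasDerivAt (fun s : ℝ => k*s) k t := by
      simpa using (hasDerivAt_id t).const_mul k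
    exact this.exp
  have hw : ∀ t, HasDerivAt w (DV t * Real.exp (k*t) + V t * (Real.exp (k*t) * k)) t :=
    fun t => (hderiv t).mul (hexp t)
  have hanti : Antitone w := by
    apply antitone_of_deriv_nonpos (fun t => (hw t).differentiableAt)
    intro t
    rw [(hw t).deriv]
    nlinarith [mul_le_mul_of_nonneg_right (hVk t) (Real.exp_pos (k*t)).le,
      Real.exp_pos (k*t), hVnn t]
  have hub : ∀ t : ℝ, 0 ≤ t → V t ≤ V 0 * Real.exp (-(k*t)) := by
    intro t ht
    have h0 := hanti ht
    rw [hwdef] at h0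
    simp only [mul_zero, Real.exp_zero, mul_one] at h0
    rw [Real.exp_neg, ← div_eq_mul_inv]
    exact (le_div_iff₀ (Real.exp_pos _)).2 h0
  have hupper : Tendsto (fun t => V 0 * Real.exp (-(k*t))) atTop (nhds 0) := by
    have h1 : Tendsto (fun t : ℝ => k*t) atTop atTop :=
      Tendsto.const_mul_atTop hk tendsto_id
    have h2 := Real.tendsto_exp_neg_atTop_nhds_zero.comp h1
    simpa using h2.const_mul (V 0)
  have hVtend : Tendsto V atTop (nhds 0) := by
    apply tendsto_of_tendsto_of_tendsto_of_le_of_le' tendsto_const_nhds hupper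
    · exact Eventually.of_forall hVnn
    · exact (eventually_ge_atTop 0).mono fun t ht => hub t ht
  have hStend : Tendsto (fun t => Sx t + Sη t) atTop (nhds 0) := by
    apply tendsto_of_tendsto_of_tendsto_of_le_of_le' tendsto_const_nhds
      (by simpa using hVtend.div_const mlow)
    · exact Eventually.of_forall fun t => by nlinarith [hSx0 t, hSη0 t]
    · exact Eventually.of_forall fun t =>
        (le_div_iff₀' hmlow).2 (by nlinarith [hVlow t])
  have hSxtend : Tendsto Sx atTop (nhds 0) := by
    apply tendsto_of_tendsto_of_tendsto_of_le_of_le' tendsto_const_nhds hStend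
      (Eventually.of_forall hSx0)
      (Eventually.of_forall fun t => by nlinarith [hSη0 t])
  have hSηtend : Tendsto Sη atTop (nhds 0) := by
    apply tendsto_of_tendsto_of_tendsto_of_le_of_le' tendsto_const_nhds hStend
      (Eventually.of_forall hSη0)
      (Eventually.of_forall fun t => by nlinarith [hSx0 t])
  refine ⟨c, hc, fun t => by rw [(hderiv t).deriv]; exact hbound t, ?_, ?_⟩
  · have := (Real.continuous_sqrt.tendsto 0).comp hSxtend
    simpa [enorm2, Function.comp_def, hSxdef] using this
  · have := (Real.continuous_sqrt.tendsto 0).comp hSηtend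
    simpa [enorm2, Function.comp_def, hSηdef] using this
end

section
/- Let A₂₂ be an invertible m×m real matrix, A₁₂ ∈ ℝ^{n×m}, A₂₁ ∈ ℝ^{m×n}. If both A₂₂ and the Schur-type matrix A_s := −A₁₂A₂₂⁻¹A₂₁ are Hurwitz, then for all sufficiently small ε > 0, the matrix of the coupled system [[A₁₂Γ₀, A₁₂], [−Γ₀A₁₂Γ₀, A₂₂/ε − Γ₀A₁₂]] (with Γ₀ = −A₂₂⁻¹A₂₁) is Hurwitz. -/
open Matrix Filter

namespace HwAux

variable {ι : Type*} [Fintype ι] [DecidableEq ι]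

attribute [local instance] Matrix.linftyOpNormedAddCommGroup Matrix.linftyOpNormedRing
  Matrix.linftyOpNormedAlgebra

noncomputable local instance : CompleteSpace (Matrix ι ι ℂ) := FiniteDimensional.complete ℂ _

lemma mem_spectrum_iff_eigen (M : Matrix ι ι ℂ) (μ : ℂ) :
    μ ∈ spectrum ℂ M ↔ ∃ v, v ≠ 0 ∧ M.mulVec v = μ • v := by
  rw [spectrum.mem_iff, Matrix.isUnit_iff_isUnit_det, isUnit_iff_ne_zero, not_ne_iff,
    ← Matrix.exists_mulVec_eq_zero_iff]
  have key : ∀ v : ι → ℂ, (algebraMap ℂ (Matrix ι ι ℂ) μ - M).mulVec v = μ • v - M.mulVec v := by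
    intro v
    rw [Matrix.sub_mulVec, Algebra.algebraMap_eq_smul_one, Matrix.smul_mulVec,
      Matrix.one_mulVec]
  constructor
  · rintro ⟨v, hv, h⟩
    rw [key, sub_eq_zero] at h
    exact ⟨v, hv, h.symm⟩
  · rintro ⟨v, hv, h⟩
    exact ⟨v, hv, by rw [key, h, sub_self]⟩

lemma norm_one_le : ‖(1 : Matrix ι ι ℂ)‖ ≤ 1 := by
  cases isEmpty_or_nonempty ι
  · have : (1 : Matrix ι ι ℂ) = 0 := Subsingleton.elim _ _
    simp [this]
  · exact le_of_eq norm_one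

/-- Robustness of the Hurwitz property under small perturbations. -/
lemma hurwitz_robust (A : Matrix ι ι ℂ) (hA : ∀ μ ∈ spectrum ℂ A, μ.re < 0) :
    ∃ δ > 0, ∀ E : Matrix ι ι ℂ, ‖E‖ < δ → ∀ μ ∈ spectrum ℂ (A + E), μ.re < 0 := by
  cases isEmpty_or_nonempty ι
  · refine ⟨1, one_pos, fun E _ μ hμ => ?_⟩
    exact absurd (spectrum.notMem_iff.mpr (isUnit_of_subsingleton _) hμ) (fun h => h)
  -- every point of the closed right half-plane is in the resolvent set
  have h0 : ∀ z : ℂ, 0 ≤ z.re → IsUnit (algebraMap ℂ (Matrix ι ι ℂ) z - A) := by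
    intro z hz
    by_contra h
    exact absurd (hA z (spectrum.mem_iff.mpr h)) (not_lt.mpr hz)
  set f : ℂ → ℝ := fun z => ‖Ring.inverse (algebraMap ℂ (Matrix ι ι ℂ) z - A)‖ with hf
  set S : Set ℂ := {z | 0 ≤ z.re} with hS
  set K : Set ℂ := S ∩ Metric.closedBall 0 (‖A‖ + 1) with hK
  have hKc : IsCompact K := by
    refine (isCompact_closedBall 0 (‖A‖+1)).inter_left ?_
    exact isClosed_le continuous_const Complex.continuous_re
  have hK0 : (0 : ℂ) ∈ K := by
    constructor
    · simp [hS]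
    · simp only [Metric.mem_closedBall, dist_self]
      have := norm_nonneg A
      linarith
  have hfc : ContinuousOn f K := by
    intro z hz
    have hu := h0 z hz.1
    have h1 : ContinuousAt (fun z : ℂ => algebraMap ℂ (Matrix ι ι ℂ) z - A) z := by
      fun_prop
    have h2 : ContinuousAt Ring.inverse (algebraMap ℂ (Matrix ι ι ℂ) z - A) := by
      have := NormedRing.inverse_continuousAt hu.unit
      rwa [hu.unit_spec] at this
    have h3 : ContinuousAt (fun z : ℂ => Ring.inverse (algebraMap ℂ (Matrix ι ι ℂ) z - A)) z :=
      Filter.Tendsto.comp h2 h1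
    exact h3.norm.continuousWithinAt
  obtain ⟨z₀, _, hz₀⟩ := hKc.exists_isMaxOn ⟨0, hK0⟩ hfc
  set C : ℝ := max (f z₀) 1 with hC
  have hC1 : (1:ℝ) ≤ C := le_max_right _ _
  have hC0 : 0 < C := lt_of_lt_of_le one_pos hC1
  -- tail bound: for z in S outside the ball, f z ≤ 1
  have htail : ∀ z : ℂ, ‖A‖ + 1 < ‖z‖ → f z ≤ 1 := by
    intro z hz
    have hz0 : z ≠ 0 := by
      intro h; rw [h] at hz; simp at hz; nlinarith [norm_nonneg A]
    have hznorm : (0:ℝ) < ‖z‖ := norm_pos_iff.mpr hz0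
    set w : Matrix ι ι ℂ := z⁻¹ • A with hw
    have hwn : ‖w‖ < 1 := by
      rw [hw, norm_smul, norm_inv]
      rw [inv_mul_lt_iff₀ hznorm]
      nlinarith
    have hfact : algebraMap ℂ (Matrix ι ι ℂ) z - A = z • ((1 : Matrix ι ι ℂ) - w) := by
      rw [smul_sub, hw, smul_smul, mul_inv_cancel₀ hz0, one_smul,
        Algebra.algebraMap_eq_smul_one]
    set V : Matrix ι ι ℂ := ∑' n : ℕ, w ^ n with hV
    have hunit : (z • ((1 : Matrix ι ι ℂ) - w)) * (z⁻¹ • V) = 1 := by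
      rw [smul_mul_smul_comm, mul_inv_cancel₀ hz0, one_smul]
      exact mul_neg_geom_series w hwn
    have hunit' : (z⁻¹ • V) * (z • ((1 : Matrix ι ι ℂ) - w)) = 1 := by
      rw [smul_mul_smul_comm, inv_mul_cancel₀ hz0, one_smul]
      exact geom_series_mul_neg w hwn
    set U : (Matrix ι ι ℂ)ˣ := ⟨z • ((1 : Matrix ι ι ℂ) - w), z⁻¹ • V, hunit, hunit'⟩ with hU
    have : f z = ‖z⁻¹ • V‖ := by
      rw [hf]
      simp only [hfact]
      have : Ring.inverse (U : Matrix ι ι ℂ) = ↑U⁻¹ := Ring.inverse_unit U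
      exact congrArg norm this
    rw [this, norm_smul, norm_inv]
    have hVb : ‖V‖ ≤ (1 - ‖w‖)⁻¹ := by
      have := tsum_geometric_le_of_norm_lt_one w hwn
      have h1 := norm_one_le (ι := ι)
      change ‖V‖ ≤ _ at this
      linarith
    have hwA : ‖w‖ = ‖A‖ / ‖z‖ := by
      rw [hw, norm_smul, norm_inv, div_eq_inv_mul]
    have h2 : (1 - ‖w‖)⁻¹ ≤ ‖z‖ := by
      rw [inv_le_comm₀ (by linarith) hznorm, hwA, le_sub_iff_add_le, inv_eq_one_div,
        ← add_div, div_le_one hznorm]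
      linarith
    calc ‖z‖⁻¹ * ‖V‖ ≤ ‖z‖⁻¹ * ‖z‖ := by
          apply mul_le_mul_of_nonneg_left (hVb.trans h2) (by positivity)
      _ = 1 := inv_mul_cancel₀ (ne_of_gt hznorm)
  refine ⟨C⁻¹, by positivity, fun E hE μ hμ => ?_⟩
  by_contra hcon
  push_neg at hcon
  have hu : IsUnit (algebraMap ℂ (Matrix ι ι ℂ) μ - A) := h0 μ hcon
  set W : Matrix ι ι ℂ := Ring.inverse (algebraMap ℂ (Matrix ι ι ℂ) μ - A) with hWdef
  have hW : ‖W‖ ≤ C := by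
    by_cases hc : ‖μ‖ ≤ ‖A‖ + 1
    · have hμK : μ ∈ K := ⟨hcon, by simpa [Metric.mem_closedBall] using hc⟩
      exact (hz₀ hμK).trans (le_max_left _ _)
    · exact (htail μ (not_le.mp hc)).trans hC1
  have hWE : ‖W * E‖ < 1 := by
    calc ‖W * E‖ ≤ ‖W‖ * ‖E‖ := norm_mul_le _ _
      _ ≤ C * ‖E‖ := mul_le_mul_of_nonneg_right hW (norm_nonneg E)
      _ < C * C⁻¹ := by exact (mul_lt_mul_iff_right₀ hC0).mpr hE
      _ = 1 := mul_inv_cancel₀ (ne_of_gt hC0)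
  have hfac : algebraMap ℂ (Matrix ι ι ℂ) μ - (A + E)
      = (algebraMap ℂ (Matrix ι ι ℂ) μ - A) * (1 - W * E) := by
    rw [mul_sub, mul_one, ← mul_assoc, Ring.mul_inverse_cancel _ hu, one_mul,
      sub_add_eq_sub_sub]
  have : IsUnit (algebraMap ℂ (Matrix ι ι ℂ) μ - (A + E)) := by
    rw [hfac]
    exact hu.mul (isUnit_one_sub_of_norm_lt_one hWE)
  exact spectrum.mem_iff.mp hμ this

lemma algebraMap_mulVec (z : ℂ) (v : ι → ℂ) :
    (algebraMap ℂ (Matrix ι ι ℂ) z) *ᵥ v = z • v := by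
  rw [Algebra.algebraMap_eq_smul_one, Matrix.smul_mulVec, Matrix.one_mulVec]

lemma rmap_mul {p q r : ℕ} (M : Matrix (Fin p) (Fin q) ℝ) (N : Matrix (Fin q) (Fin r) ℝ) :
    (M * N).map Complex.ofReal = M.map Complex.ofReal * N.map Complex.ofReal :=
  Matrix.map_mul (f := Complex.ofRealHom)

lemma rmap_neg {p q : ℕ} (M : Matrix (Fin p) (Fin q) ℝ) :
    (-M).map Complex.ofReal = -(M.map Complex.ofReal) := by
  ext i j; simp [Matrix.map_apply]

lemma rmap_smul {p q : ℕ} (r : ℝ) (M : Matrix (Fin p) (Fin q) ℝ) :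
    (r • M).map Complex.ofReal = (r : ℂ) • (M.map Complex.ofReal) := by
  ext i j; simp [Matrix.map_apply]

lemma rmap_sub {p q : ℕ} (M N : Matrix (Fin p) (Fin q) ℝ) :
    (M - N).map Complex.ofReal = M.map Complex.ofReal - N.map Complex.ofReal := by
  ext i j; simp [Matrix.map_apply]

set_option maxHeartbeats 1000000 in
theorem main {n m : ℕ}
    (A₁₂ : Matrix (Fin n) (Fin m) ℝ) (A₂₁ : Matrix (Fin m) (Fin n) ℝ)
    (A₂₂ : Matrix (Fin m) (Fin m) ℝ) (hinv : IsUnit A₂₂.det)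
    (hA₂₂ : IsHurwitz A₂₂)
    (hAs : IsHurwitz (-(A₁₂ * A₂₂⁻¹ * A₂₁)))
    (Γ₀ : Matrix (Fin m) (Fin n) ℝ) (hΓ : Γ₀ = -(A₂₂⁻¹ * A₂₁)) :
    ∃ ε₀ > 0, ∀ ε : ℝ, 0 < ε → ε < ε₀ →
      IsHurwitz (Matrix.fromBlocks (A₁₂ * Γ₀) A₁₂
        (-(Γ₀ * A₁₂ * Γ₀)) (ε⁻¹ • A₂₂ - Γ₀ * A₁₂)) := by
  classical
  set B12 := A₁₂.map Complex.ofReal with hB12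
  set B21 := A₂₁.map Complex.ofReal with hB21
  set B22 := A₂₂.map Complex.ofReal with hB22
  set G := Γ₀.map Complex.ofReal with hG
  set Binv := (A₂₂⁻¹).map Complex.ofReal with hBinv
  have hBB : B22 * Binv = 1 := by
    rw [hB22, hBinv, ← rmap_mul, Matrix.mul_nonsing_inv _ hinv]
    exact Matrix.map_one _ Complex.ofReal_zero Complex.ofReal_one
  have hBB' : Binv * B22 = 1 := by
    rw [hB22, hBinv, ← rmap_mul, Matrix.nonsing_inv_mul _ hinv]
    exact Matrix.map_one _ Complex.ofReal_zero Complex.ofReal_one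
  -- robustness radii
  obtain ⟨δ₁, hδ₁pos, hδ₁⟩ := hurwitz_robust B22 hA₂₂
  obtain ⟨δs, hδspos, hδs⟩ :=
    hurwitz_robust ((-(A₁₂ * A₂₂⁻¹ * A₂₁)).map Complex.ofReal) hAs
  -- resolvent-type family
  set g : ℂ → Matrix (Fin n) (Fin n) ℂ :=
    fun l => B12 * Ring.inverse (algebraMap ℂ (Matrix (Fin m) (Fin m) ℂ) l - B22) * B21
    with hg
  set U0 : (Matrix (Fin m) (Fin m) ℂ)ˣ :=
    ⟨-B22, -Binv, by rw [neg_mul_neg, hBB], by rw [neg_mul_neg, hBB']⟩ with hU0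
  have hmap0 : algebraMap ℂ (Matrix (Fin m) (Fin m) ℂ) 0 - B22 = -B22 := by
    rw [map_zero, zero_sub]
  have hg0 : g 0 = (-(A₁₂ * A₂₂⁻¹ * A₂₁)).map Complex.ofReal := by
    rw [rmap_neg, rmap_mul, rmap_mul, hg]
    simp only [hmap0]
    have : Ring.inverse ((U0 : Matrix (Fin m) (Fin m) ℂ)) = ↑U0⁻¹ := Ring.inverse_unit U0
    rw [show ((U0 : Matrix (Fin m) (Fin m) ℂ)) = -B22 from rfl] at this
    rw [this, show ((U0⁻¹ : (Matrix (Fin m) (Fin m) ℂ)ˣ) : Matrix (Fin m) (Fin m) ℂ)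
      = -Binv from rfl]
    rw [← hB12, ← hB21, ← hBinv]
    simp [Matrix.mul_neg, Matrix.neg_mul]
  have h3 : ContinuousAt
      (fun l : ℂ => Ring.inverse (algebraMap ℂ (Matrix (Fin m) (Fin m) ℂ) l - B22)) 0 := by
    have h1 : ContinuousAt
        (fun l : ℂ => algebraMap ℂ (Matrix (Fin m) (Fin m) ℂ) l - B22) 0 :=
      ((continuous_algebraMap ℂ _).continuousAt).sub continuousAt_const
    have h2 : ContinuousAt Ring.inverse
        (algebraMap ℂ (Matrix (Fin m) (Fin m) ℂ) 0 - B22) := by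
      rw [hmap0]
      exact NormedRing.inverse_continuousAt U0
    exact Filter.Tendsto.comp h2 h1
  have hnb : (0:ℝ) < ‖B12‖ * ‖B21‖ + 1 := by positivity
  obtain ⟨δ₂, hδ₂pos, hδ₂'⟩ := Metric.continuousAt_iff.mp h3
    (δs / (‖B12‖ * ‖B21‖ + 1)) (by positivity)
  have hδ₂ : ∀ l : ℂ, ‖l‖ < δ₂ → ‖g l - g 0‖ < δs := by
    intro l hlδ
    have hd := hδ₂' (by simpa [dist_eq_norm] using hlδ)
    rw [dist_eq_norm] at hd
    have hfactor : g l - g 0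
        = B12 * (Ring.inverse (algebraMap ℂ (Matrix (Fin m) (Fin m) ℂ) l - B22)
            - Ring.inverse (algebraMap ℂ (Matrix (Fin m) (Fin m) ℂ) 0 - B22)) * B21 := by
      rw [Matrix.mul_sub, Matrix.sub_mul]
    rw [hfactor]
    calc ‖B12 * (Ring.inverse (algebraMap ℂ (Matrix (Fin m) (Fin m) ℂ) l - B22)
            - Ring.inverse (algebraMap ℂ (Matrix (Fin m) (Fin m) ℂ) 0 - B22)) * B21‖
        ≤ ‖B12 * (Ring.inverse (algebraMap ℂ (Matrix (Fin m) (Fin m) ℂ) l - B22)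
            - Ring.inverse (algebraMap ℂ (Matrix (Fin m) (Fin m) ℂ) 0 - B22))‖ * ‖B21‖ :=
          Matrix.linfty_opNorm_mul _ _
      _ ≤ ‖B12‖ * ‖Ring.inverse (algebraMap ℂ (Matrix (Fin m) (Fin m) ℂ) l - B22)
            - Ring.inverse (algebraMap ℂ (Matrix (Fin m) (Fin m) ℂ) 0 - B22)‖ * ‖B21‖ :=
          mul_le_mul_of_nonneg_right (Matrix.linfty_opNorm_mul _ _) (norm_nonneg _)
      _ < δs := by
          have hb1 : (0:ℝ) ≤ ‖B12‖ := norm_nonneg _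
          have hb2 : (0:ℝ) ≤ ‖B21‖ := norm_nonneg _
          have hn0 : (0:ℝ) ≤ ‖Ring.inverse (algebraMap ℂ (Matrix (Fin m) (Fin m) ℂ) l - B22)
            - Ring.inverse (algebraMap ℂ (Matrix (Fin m) (Fin m) ℂ) 0 - B22)‖ := norm_nonneg _
          have hq : (δs / (‖B12‖ * ‖B21‖ + 1)) * (‖B12‖ * ‖B21‖ + 1) = δs :=
            div_mul_cancel₀ _ (ne_of_gt hnb)
          have hqpos : (0:ℝ) < δs / (‖B12‖ * ‖B21‖ + 1) := div_pos hδspos hnb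
          nlinarith [hd, mul_le_mul_of_nonneg_left hd.le (mul_nonneg hb1 hb2)]
  set CN : ℝ := ‖B21 * B12‖ with hCN
  have hCN0 : 0 ≤ CN := norm_nonneg _
  refine ⟨min 1 (δ₁ * δ₂ / (CN + 1)), by positivity, fun ε hε0 hεlt => ?_⟩
  intro μ hμ
  by_contra hcon
  push_neg at hcon
  have hεC : (ε : ℂ) ≠ 0 := Complex.ofReal_ne_zero.mpr (ne_of_gt hε0)
  set l : ℂ := (ε : ℂ) * μ with hl
  have hlre : 0 ≤ l.re := by
    rw [hl, Complex.re_ofReal_mul]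
    exact mul_nonneg (le_of_lt hε0) hcon
  -- extract the eigenvector
  have hmapF : (Matrix.fromBlocks (A₁₂ * Γ₀) A₁₂
      (-(Γ₀ * A₁₂ * Γ₀)) (ε⁻¹ • A₂₂ - Γ₀ * A₁₂)).map Complex.ofReal
      = Matrix.fromBlocks (B12 * G) B12 (-(G * B12 * G)) ((ε : ℂ)⁻¹ • B22 - G * B12) := by
    rw [Matrix.fromBlocks_map]
    rw [rmap_mul, rmap_neg, rmap_mul, rmap_mul, rmap_sub, rmap_smul, rmap_mul,
      Complex.ofReal_inv]
  rw [hmapF] at hμ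
  rw [mem_spectrum_iff_eigen] at hμ
  obtain ⟨v, hv, hVeq⟩ := hμ
  set x : Fin n → ℂ := fun i => v (Sum.inl i) with hx
  set y : Fin m → ℂ := fun j => v (Sum.inr j) with hy
  have hv' : v = Sum.elim x y := by funext i; cases i <;> rfl
  rw [hv', Matrix.fromBlocks_mulVec] at hVeq
  have eq1 : (B12 * G) *ᵥ x + B12 *ᵥ y = μ • x := by
    funext i; exact congrFun hVeq (Sum.inl i)
  have eq2 : (-(G * B12 * G)) *ᵥ x + ((ε : ℂ)⁻¹ • B22 - G * B12) *ᵥ y = μ • y := by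
    funext j; exact congrFun hVeq (Sum.inr j)
  set u : Fin m → ℂ := G *ᵥ x + y with hu
  have h1 : B12 *ᵥ u = μ • x := by
    rw [hu, Matrix.mulVec_add, Matrix.mulVec_mulVec]
    exact eq1
  have hεAy : (ε : ℂ)⁻¹ • (B22 *ᵥ y) = μ • u := by
    have e2 : -(G *ᵥ (B12 *ᵥ u)) + (ε : ℂ)⁻¹ • (B22 *ᵥ y) = μ • y := by
      rw [hu, Matrix.mulVec_add, Matrix.mulVec_add]
      rw [← eq2, Matrix.neg_mulVec, Matrix.sub_mulVec, Matrix.smul_mulVec]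
      rw [← Matrix.mulVec_mulVec (v := x) (M := G * B12) (N := G),
        Matrix.mulVec_mulVec, ← Matrix.mulVec_mulVec (v := y) (M := G) (N := B12),
        Matrix.mulVec_mulVec]
      abel
    rw [h1, Matrix.mulVec_smul] at e2
    have := congrArg (fun w => w + μ • (G *ᵥ x)) e2
    simp only [neg_add_cancel_comm] at this
    rw [this, hu, smul_add]
    abel
  have hymain : B22 *ᵥ y = l • u := by
    have := congrArg (fun w => (ε : ℂ) • w) hεAy
    simp only [smul_smul, mul_inv_cancel₀ hεC, one_smul] at this
    rw [this, hl]
  have hA22G : B22 * G = -B21 := by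
    rw [hB22, hG, hB21, ← rmap_neg, ← rmap_mul]
    rw [hΓ, Matrix.mul_neg, ← Matrix.mul_assoc, Matrix.mul_nonsing_inv _ hinv, Matrix.one_mul]
  have hkey : B21 *ᵥ x + B22 *ᵥ u = l • u := by
    rw [hu, Matrix.mulVec_add, Matrix.mulVec_mulVec, hA22G, Matrix.neg_mulVec, hymain]
    abel
  have hxu : ¬(x = 0 ∧ u = 0) := by
    rintro ⟨hx0, hu0⟩
    apply hv
    rw [hv']
    have hy0 : y = 0 := by
      have : u = G *ᵥ x + y := hu
      rw [hx0, hu0, Matrix.mulVec_zero, zero_add] at this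
      exact this.symm
    rw [hx0, hy0]
    funext i; cases i <;> rfl
  have hlunit : IsUnit (algebraMap ℂ (Matrix (Fin m) (Fin m) ℂ) l - B22) := by
    by_contra hnu
    exact absurd (hA₂₂ l (spectrum.mem_iff.mpr hnu)) (not_lt.mpr hlre)
  by_cases hcase : ‖l‖ < δ₂
  · -- small l: μ is an eigenvalue of a perturbation of the slow matrix
    set W : Matrix (Fin m) (Fin m) ℂ :=
      Ring.inverse (algebraMap ℂ (Matrix (Fin m) (Fin m) ℂ) l - B22) with hW
    have hWinv : W * (algebraMap ℂ (Matrix (Fin m) (Fin m) ℂ) l - B22) = 1 :=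
      Ring.inverse_mul_cancel _ hlunit
    have hres : (algebraMap ℂ (Matrix (Fin m) (Fin m) ℂ) l - B22) *ᵥ u = B21 *ᵥ x := by
      rw [Matrix.sub_mulVec, algebraMap_mulVec, ← hkey]
      abel
    have hueq : u = W *ᵥ (B21 *ᵥ x) := by
      rw [← hres, Matrix.mulVec_mulVec, hWinv, Matrix.one_mulVec]
    have hx0 : x ≠ 0 := by
      intro h
      exact hxu ⟨h, by rw [hueq, h, Matrix.mulVec_zero, Matrix.mulVec_zero]⟩
    have hgev : (g l) *ᵥ x = μ • x := by
      show (B12 * W * B21) *ᵥ x = μ • x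
      rw [← Matrix.mulVec_mulVec, ← Matrix.mulVec_mulVec, ← hueq, h1]
    have hμspec : μ ∈ spectrum ℂ (g l) :=
      (mem_spectrum_iff_eigen _ _).mpr ⟨x, hx0, hgev⟩
    have hnorm : ‖g l - g 0‖ < δs := hδ₂ l hcase
    have : μ.re < 0 := by
      refine hδs (g l - g 0) hnorm μ ?_
      rwa [hg0, add_sub_cancel]
    exact absurd this (not_lt.mpr hcon)
  · -- large l: l is an eigenvalue of a perturbation of the fast matrix
    push_neg at hcase
    have hμ0 : μ ≠ 0 := by
      intro h
      rw [hl, h, mul_zero] at hcase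
      simp at hcase
      linarith
    have hu0 : u ≠ 0 := by
      intro h
      apply hxu
      refine ⟨?_, h⟩
      rw [h, Matrix.mulVec_zero] at h1
      have := h1.symm
      rcases smul_eq_zero.mp this with h' | h'
      · exact absurd h' hμ0
      · exact h'
    set E : Matrix (Fin m) (Fin m) ℂ := μ⁻¹ • (B21 * B12) with hE
    have hNev : (B22 + E) *ᵥ u = l • u := by
      rw [Matrix.add_mulVec, hE, Matrix.smul_mulVec, ← Matrix.mulVec_mulVec, h1,
        Matrix.mulVec_smul, smul_smul, inv_mul_cancel₀ hμ0, one_smul, ← hkey]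
      abel
    have hlspec : l ∈ spectrum ℂ (B22 + E) :=
      (mem_spectrum_iff_eigen _ _).mpr ⟨u, hu0, hNev⟩
    have hμnorm : δ₂ / ε ≤ ‖μ‖ := by
      rw [div_le_iff₀ hε0]
      calc δ₂ ≤ ‖l‖ := hcase
        _ = ‖μ‖ * ε := by
          rw [hl, norm_mul, Complex.norm_real, Real.norm_of_nonneg (le_of_lt hε0), mul_comm]
    have hEnorm : ‖E‖ < δ₁ := by
      have hμpos : 0 < ‖μ‖ := norm_pos_iff.mpr hμ0
      have hinvμ : ‖μ‖⁻¹ ≤ ε / δ₂ := by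
        rw [inv_le_comm₀ hμpos (by positivity), inv_div]
        exact hμnorm
      have heps : ε < δ₁ * δ₂ / (CN + 1) := lt_of_lt_of_le hεlt (min_le_right _ _)
      have hE1 : ‖E‖ = ‖μ‖⁻¹ * CN := by rw [hE, norm_smul, norm_inv, hCN]
      have hE2 : ‖μ‖⁻¹ * CN ≤ (ε / δ₂) * CN := mul_le_mul_of_nonneg_right hinvμ hCN0
      have hE3 : (ε / δ₂) * CN < δ₁ := by
        rw [div_mul_eq_mul_div, div_lt_iff₀ hδ₂pos]
        have h5 := (lt_div_iff₀ (show (0:ℝ) < CN + 1 by positivity)).mp heps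
        nlinarith
      rw [hE1]
      exact lt_of_le_of_lt hE2 hE3
    have : l.re < 0 := hδ₁ E hEnorm l hlspec
    exact absurd this (not_lt.mpr hlre)

end HwAux

theorem stmt_13 {n m : ℕ}
    (A₁₂ : Matrix (Fin n) (Fin m) ℝ) (A₂₁ : Matrix (Fin m) (Fin n) ℝ)
    (A₂₂ : Matrix (Fin m) (Fin m) ℝ) (hinv : IsUnit A₂₂.det)
    (hA₂₂ : IsHurwitz A₂₂)
    (hAs : IsHurwitz (-(A₁₂ * A₂₂⁻¹ * A₂₁)))
    (Γ₀ : Matrix (Fin m) (Fin n) ℝ) (hΓ : Γ₀ = -(A₂₂⁻¹ * A₂₁)) :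
    ∃ ε₀ > 0, ∀ ε : ℝ, 0 < ε → ε < ε₀ →
      IsHurwitz (Matrix.fromBlocks (A₁₂ * Γ₀) A₁₂
        (-(Γ₀ * A₁₂ * Γ₀)) (ε⁻¹ • A₂₂ - Γ₀ * A₁₂)) := by
  exact HwAux.main A₁₂ A₂₁ A₂₂ hinv hA₂₂ hAs Γ₀ hΓ
end
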